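/- If G has no antitriangles and has a Kempe-coloring of size k, then G is k-connected or admits a shallow clique minor of size k. -/

import Mathlib

/-!
Colour classes are anticliques, hence have at most two vertices, and connectivity of two-class
Kempe chains gives every vertex a neighbour in every other class; so a singleton class is a
universal vertex. If all classes are singletons they form a `k`-clique. Otherwise `G` has more
than `k` vertices; suppose `G - S` is disconnected with `|S| < k`. Universal vertices lie in `S`,
so by pigeonhole some class `{a, b}` avoids `S`, and every vertex outside `S` is adjacent to `a`
or `b`. Hence the neighbourhoods `A` of `a` and `B` of `b` outside `S` are disjoint with no edges
between them, and `A` is a clique (two non-adjacent vertices of `A` would form an antitriangle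
with `b`). The four-vertex Kempe chains put the class-mate of every vertex of `A ∪ B` in `S` and
make class-mates of `A` adjacent to class-mates of `B`. If `|B| ≤ |A|`, match `B` injectively
into `A`: the branch sets `{a}`, the universal vertices, the vertices of `A`, and the class-mates
of each matched couple form a shallow clique minor, and counting (`|V| + #universal = 2k`) shows
it has at least `k` branch sets.
-/

open SimpleGraph

/-- `A` is an anticlique (independent set) of `G`. -/
def IsAnticlique {V : Type*} (G : SimpleGraph V) (A : Finset V) : Prop :=
  ∀ x ∈ A, ∀ y ∈ A, ¬ G.Adj x y

/-- A coloring of `G`: a partition of the vertex set into nonempty anticliques. -/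
def IsColoring {V : Type*} (G : SimpleGraph V) (c : Finset (Finset V)) : Prop :=
  (∀ A ∈ c, A.Nonempty) ∧
  (∀ A ∈ c, ∀ B ∈ c, A ≠ B → Disjoint A B) ∧
  (∀ v : V, ∃ A ∈ c, v ∈ A) ∧
  (∀ A ∈ c, IsAnticlique G A)

/-- `A` induces a connected subgraph of `G`. -/
def ConnSet {V : Type*} (G : SimpleGraph V) (A : Finset V) : Prop :=
  (G.induce (↑A : Set V)).Connected

/-- A Kempe-coloring: any two distinct classes induce a connected subgraph. -/
def IsKempe {V : Type*} [DecidableEq V] (G : SimpleGraph V) (c : Finset (Finset V)) : Prop :=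
  IsColoring G c ∧ ∀ A ∈ c, ∀ B ∈ c, A ≠ B → ConnSet G (A ∪ B)

/-- Two vertex sets are adjacent if some edge joins them. -/
def SetsAdj {V : Type*} (G : SimpleGraph V) (A B : Finset V) : Prop :=
  ∃ a ∈ A, ∃ b ∈ B, G.Adj a b

/-- A clique minor: pairwise disjoint, pairwise adjacent, nonempty connected subsets. -/
def IsCliqueMinor {V : Type*} (G : SimpleGraph V) (K : Finset (Finset V)) : Prop :=
  (∀ A ∈ K, A.Nonempty) ∧ (∀ A ∈ K, ConnSet G A) ∧
  (∀ A ∈ K, ∀ B ∈ K, A ≠ B → Disjoint A B ∧ SetsAdj G A B)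

/-- A shallow clique minor: a clique minor all of whose branch sets have size 1 or 2. -/
def IsShallowCliqueMinor {V : Type*} (G : SimpleGraph V) (K : Finset (Finset V)) : Prop :=
  IsCliqueMinor G K ∧ ∀ A ∈ K, A.card ≤ 2

/-- `T` is a transversal of the family `K`: it meets each member in exactly one vertex. -/
def Traversed {V : Type*} [DecidableEq V] (T : Finset V) (K : Finset (Finset V)) : Prop :=
  ∀ A ∈ K, (T ∩ A).card = 1

/-- `c` is a coloring of `G` of minimum size, i.e. of size `χ(G)`. -/
def MinColoring {V : Type*} (G : SimpleGraph V) (c : Finset (Finset V)) : Prop :=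
  IsColoring G c ∧ ∀ d, IsColoring G d → c.card ≤ d.card

/-- `G` has no antitriangle (independent set of size 3). -/
def HasNoAntitriangle {V : Type*} (G : SimpleGraph V) : Prop :=
  ¬ ∃ A : Finset V, A.card = 3 ∧ IsAnticlique G A

section

variable {V : Type*} {G : SimpleGraph V}

lemma ConnSet.exists_adj_of_mem_of_notMem {F : Finset V} (hF : ConnSet G F) (s : Set V)
    {x y : V} (hx : x ∈ F) (hy : y ∈ F) (hxs : x ∈ s) (hys : y ∉ s) :
    ∃ u ∈ F, ∃ v ∈ F, u ∈ s ∧ v ∉ s ∧ G.Adj u v := by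
  obtain ⟨w⟩ := hF.preconnected ⟨x, hx⟩ ⟨y, hy⟩
  obtain ⟨d, -, hds, hdt⟩ := w.exists_boundary_dart {z | z.1 ∈ s} hxs hys
  exact ⟨_, d.fst.2, _, d.snd.2, hds, hdt, d.adj⟩

lemma reachable_induce_of_adj {T : Set V} {u v : V} (hu : u ∈ T) (hv : v ∈ T)
    (huv : G.Adj u v) : (G.induce T).Reachable ⟨u, hu⟩ ⟨v, hv⟩ :=
  Adj.reachable (G := G.induce T) huv

lemma connSet_pair [DecidableEq V] {x y : V} (h : x = y ∨ G.Adj x y) : ConnSet G {x, y} := by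
  refine (connected_iff_exists_forall_reachable _).2 ⟨⟨x, by simp⟩, ?_⟩
  rintro ⟨z, hz⟩
  obtain rfl | rfl : z = x ∨ z = y := by simpa using hz
  · rfl
  · obtain rfl | hxz := h
    exacts [.rfl, reachable_induce_of_adj _ _ hxz]

lemma induce_connected_of_forall_adj {T : Set V} {a b : V} (ha : a ∈ T) (hb : b ∈ T)
    (hab : (G.induce T).Reachable ⟨a, ha⟩ ⟨b, hb⟩)
    (hdom : ∀ v ∈ T, v ≠ a → v ≠ b → G.Adj a v ∨ G.Adj b v) :
    (G.induce T).Connected := by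
  refine (connected_iff_exists_forall_reachable _).2 ⟨⟨a, ha⟩, ?_⟩
  rintro ⟨v, hv⟩
  by_cases hva : v = a
  · subst hva; rfl
  by_cases hvb : v = b
  · subst hvb; exact hab
  rcases hdom v hv hva hvb with hav | hbv
  · exact reachable_induce_of_adj ha hv hav
  · exact hab.trans (reachable_induce_of_adj hb hv hbv)

lemma SetsAdj.symm {A B : Finset V} (h : SetsAdj G A B) : SetsAdj G B A :=
  let ⟨a, ha, b, hb, hab⟩ := h
  ⟨b, hb, a, ha, hab.symm⟩

lemma HasNoAntitriangle.card_le_two (hat : HasNoAntitriangle G) {A : Finset V}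
    (hA : IsAnticlique G A) : A.card ≤ 2 := by
  by_contra! h
  obtain ⟨B, hBA, hB⟩ := Finset.exists_subset_card_eq h
  exact hat ⟨B, hB, fun x hx y hy => hA x (hBA hx) y (hBA hy)⟩

lemma HasNoAntitriangle.adj_of_not_adj [DecidableEq V] (hat : HasNoAntitriangle G) {x y z : V}
    (hxy : x ≠ y) (hxz : x ≠ z) (hyz : y ≠ z) (hxz' : ¬G.Adj x z) (hyz' : ¬G.Adj y z) :
    G.Adj x y := by
  by_contra hxy'
  refine hat ⟨{x, y, z}, Finset.card_eq_three.2 ⟨x, y, z, hxy, hxz, hyz, rfl⟩, ?_⟩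
  simp only [IsAnticlique, Finset.mem_insert, Finset.mem_singleton]
  rintro u (rfl | rfl | rfl) v (rfl | rfl | rfl) huv <;>
    first | exact G.irrefl huv | tauto

section Colorings

variable [DecidableEq V] {c : Finset (Finset V)}

lemma IsColoring.eq_of_mem_of_mem (hc : IsColoring G c) {A B : Finset V} (hA : A ∈ c)
    (hB : B ∈ c) {v : V} (hvA : v ∈ A) (hvB : v ∈ B) : A = B := by
  by_contra hAB
  exact Finset.disjoint_left.1 (hc.2.1 A hA B hB hAB) hvA hvB

lemma IsColoring.sum_card_inter (hc : IsColoring G c) (X : Finset V) :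
    ∑ A ∈ c, (A ∩ X).card = X.card := by
  have hX : X = c.biUnion (· ∩ X) := by
    ext v
    simp only [Finset.mem_biUnion, Finset.mem_inter]
    refine ⟨fun hv => ?_, fun ⟨_, _, _, hv⟩ => hv⟩
    obtain ⟨A, hA, hvA⟩ := hc.2.2.1 v
    exact ⟨A, hA, hvA, hv⟩
  conv_rhs => rw [hX]
  rw [Finset.card_biUnion]
  intro A hA B hB hAB
  exact (hc.2.1 A hA B hB hAB).mono Finset.inter_subset_left Finset.inter_subset_left

lemma IsColoring.card_lt_fintype_card [Fintype V] (hc : IsColoring G c)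
    (h : ∃ A ∈ c, A.card ≠ 1) : c.card < Fintype.card V := by
  obtain ⟨A₀, hA₀, hA₀1⟩ := h
  calc c.card = ∑ A ∈ c, 1 := by simp
    _ < ∑ A ∈ c, (A ∩ Finset.univ).card := by
      refine Finset.sum_lt_sum (fun A hA => ?_) ⟨A₀, hA₀, ?_⟩
      · simpa using (hc.1 A hA).card_pos
      · have := (hc.1 A₀ hA₀).card_pos
        simp only [Finset.inter_univ]
        omega
    _ = Fintype.card V := hc.sum_card_inter _

lemma IsColoring.exists_disjoint_of_card_lt (hc : IsColoring G c) {S : Finset V}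
    (hS : S.card < c.card) : ∃ A ∈ c, Disjoint A S := by
  have : ∑ A ∈ c, (A ∩ S).card < ∑ A ∈ c, 1 := by simpa [hc.sum_card_inter] using hS
  obtain ⟨A, hA, hAS⟩ := Finset.exists_lt_of_sum_lt this
  exact ⟨A, hA, Finset.disjoint_iff_inter_eq_empty.2 (Finset.card_eq_zero.1 (by omega))⟩

lemma IsColoring.exists_pair_mem (hc : IsColoring G c) (hat : HasNoAntitriangle G) (v : V) :
    ∃ p, {v, p} ∈ c := by
  obtain ⟨A, hA, hvA⟩ := hc.2.2.1 v
  rcases (A.erase v).eq_empty_or_nonempty with hA₁ | ⟨p, hp⟩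
  · refine ⟨v, ?_⟩
    rw [Finset.pair_eq_singleton, ← (Finset.erase_eq_empty_iff A v).1 hA₁ |>.resolve_left
      (Finset.ne_empty_of_mem hvA)]
    exact hA
  · obtain ⟨hpv, hpA⟩ := Finset.mem_erase.1 hp
    have hsub : {v, p} ⊆ A := Finset.insert_subset hvA (Finset.singleton_subset_iff.2 hpA)
    refine ⟨p, Finset.eq_of_subset_of_card_le hsub ?_ ▸ hA⟩
    rw [Finset.card_pair hpv.symm]
    exact hat.card_le_two (hc.2.2.2 A hA)

def singletonClassVertices [Fintype V] (c : Finset (Finset V)) : Finset V :=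
  Finset.univ.filter fun u => {u} ∈ c

lemma IsColoring.card_add_card_singletonClassVertices [Fintype V] (hc : IsColoring G c)
    (hat : HasNoAntitriangle G) :
    Fintype.card V + (singletonClassVertices c).card = 2 * c.card := by
  rw [← Finset.card_univ, ← hc.sum_card_inter, ← hc.sum_card_inter,
    ← Finset.sum_add_distrib,
    mul_comm, ← smul_eq_mul, ← Finset.sum_const]
  refine Finset.sum_congr rfl fun A hA => ?_
  rw [Finset.inter_univ]
  by_cases hA₁ : A.card = 1
  · obtain ⟨u, rfl⟩ := Finset.card_eq_one.1 hA₁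
    simp [singletonClassVertices, hA]
  · have hA₀ : A ∩ singletonClassVertices c = ∅ := by
      refine Finset.eq_empty_of_forall_notMem fun u hu => hA₁ ?_
      obtain ⟨huA, hu⟩ := Finset.mem_inter.1 hu
      rw [hc.eq_of_mem_of_mem hA (Finset.mem_filter.1 hu).2 huA (Finset.mem_singleton_self u),
        Finset.card_singleton]
    have := (hc.1 A hA).card_pos
    have := hat.card_le_two (hc.2.2.2 A hA)
    rw [hA₀, Finset.card_empty]
    omega

lemma IsKempe.exists_adj (hc : IsKempe G c) {A B : Finset V} (hA : A ∈ c) (hB : B ∈ c)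
    (hAB : A ≠ B) {x : V} (hx : x ∈ A) : ∃ y ∈ B, G.Adj x y := by
  obtain ⟨y₀, hy₀⟩ := hc.1.1 B hB
  have hy₀x : y₀ ≠ x := fun h =>
    Finset.disjoint_left.1 (hc.1.2.1 A hA B hB hAB) hx (h ▸ hy₀)
  obtain ⟨u, -, v, hv, rfl, hvx, huv⟩ := (hc.2 A hA B hB hAB).exists_adj_of_mem_of_notMem {x}
    (Finset.mem_union_left _ hx) (Finset.mem_union_right _ hy₀) rfl hy₀x
  exact ⟨v, (Finset.mem_union.1 hv).resolve_left fun hvA => hc.1.2.2.2 A hA u hx v hvA huv, huv⟩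

lemma IsKempe.adj_of_singleton_mem (hc : IsKempe G c) {u v : V} (hu : {u} ∈ c)
    (hvu : v ≠ u) : G.Adj u v := by
  obtain ⟨B, hB, hvB⟩ := hc.1.2.2.1 v
  have hBu : B ≠ {u} := by
    rintro rfl
    exact hvu (Finset.mem_singleton.1 hvB)
  obtain ⟨y, hy, hvy⟩ := hc.exists_adj hB hu hBu hvB
  rw [Finset.mem_singleton.1 hy] at hvy
  exact hvy.symm

lemma IsKempe.adj_of_pair_mem (hc : IsKempe G c) {x p y q : V} (hxp : {x, p} ∈ c)
    (hyq : {y, q} ∈ c) (hne : ({x, p} : Finset V) ≠ {y, q}) (hxy : ¬G.Adj x y) :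
    G.Adj x q ∧ G.Adj p y ∧ G.Adj p q := by
  have hnxp : ¬G.Adj x p := hc.1.2.2.2 _ hxp x (by simp) p (by simp)
  have hnyq : ¬G.Adj y q := hc.1.2.2.2 _ hyq y (by simp) q (by simp)
  have hxq : G.Adj x q := by
    obtain ⟨z, hz, hxz⟩ := hc.exists_adj hxp hyq hne (by simp : x ∈ ({x, p} : Finset V))
    obtain rfl | rfl : z = y ∨ z = q := by simpa using hz
    exacts [absurd hxz hxy, hxz]
  have hpy : G.Adj p y := by
    obtain ⟨z, hz, hyz⟩ := hc.exists_adj hyq hxp hne.symm (by simp : y ∈ ({y, q} : Finset V))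
    obtain rfl | rfl : z = x ∨ z = p := by simpa using hz
    exacts [absurd hyz.symm hxy, hyz.symm]
  refine ⟨hxq, hpy, ?_⟩
  -- The cut {x, q} | {p, y} of the Kempe chain can only be crossed by the edge pq.
  have hy : y ∉ ({x, q} : Set V) := by
    rintro (rfl | rfl)
    exacts [hnxp hpy.symm, hxy hxq]
  obtain ⟨u, hu, v, hv, hus, hvs, huv⟩ := (hc.2 _ hxp _ hyq hne).exists_adj_of_mem_of_notMem
    {x, q} (x := x) (y := y) (by simp) (by simp) (by simp) hy
  simp only [Finset.mem_union, Finset.mem_insert, Finset.mem_singleton] at hv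
  simp only [Set.mem_insert_iff, Set.mem_singleton_iff, not_or] at hus hvs
  rcases hus with rfl | rfl <;> rcases hv with (rfl | rfl) | rfl | rfl <;> simp_all [G.adj_comm]

lemma IsKempe.mem_of_singleton_mem (hc : IsKempe G c) {S : Finset V}
    (hS : ¬(G.induce {v | v ∉ S}).Connected) {u : V} (hu : {u} ∈ c) : u ∈ S := by
  by_contra huS
  exact hS (induce_connected_of_forall_adj huS huS (.refl _)
    fun _ _ hvu _ => .inl (hc.adj_of_singleton_mem hu hvu))

lemma IsKempe.isShallowCliqueMinor_of_forall_card_eq_one (hc : IsKempe G c)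
    (h : ∀ A ∈ c, A.card = 1) : IsShallowCliqueMinor G c := by
  refine ⟨⟨hc.1.1, fun A hA => ?_, fun A hA B hB hAB => ⟨hc.1.2.1 A hA B hB hAB, ?_⟩⟩,
    fun A hA => by simp [h A hA]⟩
  · obtain ⟨x, rfl⟩ := Finset.card_eq_one.1 (h A hA)
    simpa using connSet_pair (G := G) (Or.inl (rfl : x = x))
  · obtain ⟨x, hx⟩ := hc.1.1 A hA
    obtain ⟨y, hy, hxy⟩ := hc.exists_adj hA hB hAB hx
    exact ⟨x, hx, y, hy, hxy⟩

end Colorings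

section CliqueMinor

lemma IsShallowCliqueMinor.subset {K K' : Finset (Finset V)}
    (hK : IsShallowCliqueMinor G K) (h : K' ⊆ K) : IsShallowCliqueMinor G K' :=
  ⟨⟨fun A hA => hK.1.1 A (h hA), fun A hA => hK.1.2.1 A (h hA),
    fun A hA B hB => hK.1.2.2 A (h hA) B (h hB)⟩, fun A hA => hK.2 A (h hA)⟩

lemma IsShallowCliqueMinor.disjoint {K₁ K₂ : Finset (Finset V)}
    (h₁ : IsShallowCliqueMinor G K₁) (h : ∀ A ∈ K₁, ∀ B ∈ K₂, Disjoint A B) :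
    Disjoint K₁ K₂ :=
  Finset.disjoint_left.2 fun A hA₁ hA₂ =>
    (h₁.1.1 A hA₁).ne_empty (Finset.disjoint_self_iff_empty A |>.1 (h A hA₁ A hA₂))

variable [DecidableEq V]

lemma IsShallowCliqueMinor.union {K₁ K₂ : Finset (Finset V)}
    (h₁ : IsShallowCliqueMinor G K₁) (h₂ : IsShallowCliqueMinor G K₂)
    (h : ∀ A ∈ K₁, ∀ B ∈ K₂, Disjoint A B ∧ SetsAdj G A B) :
    IsShallowCliqueMinor G (K₁ ∪ K₂) := by
  refine ⟨⟨fun A hA => ?_, fun A hA => ?_, fun A hA B hB hAB => ?_⟩, fun A hA => ?_⟩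
  · rcases Finset.mem_union.1 hA with hA | hA
    exacts [h₁.1.1 A hA, h₂.1.1 A hA]
  · rcases Finset.mem_union.1 hA with hA | hA
    exacts [h₁.1.2.1 A hA, h₂.1.2.1 A hA]
  · rcases Finset.mem_union.1 hA with hA | hA <;> rcases Finset.mem_union.1 hB with hB | hB
    · exact h₁.1.2.2 A hA B hB hAB
    · exact h A hA B hB
    · exact ⟨(h B hB A hA).1.symm, (h B hB A hA).2.symm⟩
    · exact h₂.1.2.2 A hA B hB hAB
  · rcases Finset.mem_union.1 hA with hA | hA
    exacts [h₁.2 A hA, h₂.2 A hA]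

lemma isShallowCliqueMinor_image_pair {ι : Type*} (I : Finset ι) (p q : ι → V)
    (hpq : ∀ i ∈ I, p i = q i ∨ G.Adj (p i) (q i))
    (hI : ∀ i ∈ I, ∀ j ∈ I, i ≠ j →
      Disjoint ({p i, q i} : Finset V) {p j, q j} ∧ SetsAdj G {p i, q i} {p j, q j}) :
    IsShallowCliqueMinor G (I.image fun i => {p i, q i}) ∧
      (I.image fun i => ({p i, q i} : Finset V)).card = I.card := by
  have hinj : Set.InjOn (fun i => ({p i, q i} : Finset V)) I := by
    intro i hi j hj hij
    by_contra hne
    have hdisj := (hI i hi j hj hne).1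
    rw [← show ({p i, q i} : Finset V) = {p j, q j} from hij,
      Finset.disjoint_self_iff_empty] at hdisj
    exact (Finset.insert_nonempty _ _).ne_empty hdisj
  refine ⟨⟨⟨?_, ?_, ?_⟩, ?_⟩, Finset.card_image_of_injOn hinj⟩ <;>
    simp only [Finset.mem_image, forall_exists_index, and_imp, forall_apply_eq_imp_iff₂]
  · exact fun i _ => Finset.insert_nonempty _ _
  · exact fun i hi => connSet_pair (hpq i hi)
  · exact fun i hi j hj hij => hI i hi j hj fun h => hij (h ▸ rfl)
  · exact fun i _ => Finset.card_le_two

lemma SimpleGraph.IsClique.isShallowCliqueMinor {Q : Finset V} (hQ : G.IsClique (Q : Set V)) :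
    IsShallowCliqueMinor G (Q.image fun x => {x}) ∧
      (Q.image fun x => ({x} : Finset V)).card = Q.card := by
  simpa only [Finset.pair_eq_singleton, id] using
    isShallowCliqueMinor_image_pair (G := G) Q id id (fun _ _ => .inl rfl)
      fun x hx y hy hxy => ⟨by simpa using hxy, x, by simp, y, by simp, hQ hx hy hxy⟩

end CliqueMinor

section Separation

variable [DecidableEq V] {c : Finset (Finset V)} {S : Finset V} {a b : V}

structure SeparatedPair (G : SimpleGraph V) (c : Finset (Finset V)) (S : Finset V) (a b : V) :
    Prop where
  kempe : IsKempe G c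
  noAntitriangle : HasNoAntitriangle G
  pair_mem : {a, b} ∈ c
  ne : a ≠ b
  left_notMem : a ∉ S
  right_notMem : b ∉ S
  not_connected : ¬(G.induce {v | v ∉ S}).Connected

lemma exists_separatedPair (hc : IsKempe G c) (hat : HasNoAntitriangle G)
    (hS : S.card < c.card) (hdisc : ¬(G.induce {v | v ∉ S}).Connected) :
    ∃ a b, SeparatedPair G c S a b := by
  obtain ⟨A, hA, hAS⟩ := hc.1.exists_disjoint_of_card_lt hS
  obtain ⟨a, ha⟩ := hc.1.1 A hA
  obtain ⟨b, hab⟩ := hc.1.exists_pair_mem hat a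
  have hA : A = {a, b} := hc.1.eq_of_mem_of_mem hA hab ha (by simp)
  subst hA
  have hne : a ≠ b := by
    rintro rfl
    rw [Finset.pair_eq_singleton] at hab hAS
    exact Finset.disjoint_singleton_left.1 hAS (hc.mem_of_singleton_mem hdisc hab)
  exact ⟨a, b, hc, hat, hab, hne, Finset.disjoint_left.1 hAS (by simp),
    Finset.disjoint_left.1 hAS (by simp), hdisc⟩

lemma SeparatedPair.symm (h : SeparatedPair G c S a b) : SeparatedPair G c S b a :=
  ⟨h.kempe, h.noAntitriangle, Finset.pair_comm a b ▸ h.pair_mem, h.ne.symm, h.right_notMem,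
    h.left_notMem, h.not_connected⟩

lemma SeparatedPair.not_adj (h : SeparatedPair G c S a b) : ¬G.Adj a b :=
  h.kempe.1.2.2.2 _ h.pair_mem a (by simp) b (by simp)

lemma SeparatedPair.adj_or_adj (h : SeparatedPair G c S a b) {v : V} (hva : v ≠ a)
    (hvb : v ≠ b) : G.Adj a v ∨ G.Adj b v := by
  obtain ⟨B, hB, hvB⟩ := h.kempe.1.2.2.1 v
  have hne : B ≠ {a, b} := by
    rintro rfl
    simp_all
  obtain ⟨y, hy, hvy⟩ := h.kempe.exists_adj hB h.pair_mem hne hvB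
  obtain rfl | rfl : y = a ∨ y = b := by simpa using hy
  exacts [.inl hvy.symm, .inr hvy.symm]

lemma SeparatedPair.not_reachable (h : SeparatedPair G c S a b) :
    ¬(G.induce {v | v ∉ S}).Reachable ⟨a, h.left_notMem⟩ ⟨b, h.right_notMem⟩ :=
  fun hab =>
  h.not_connected (induce_connected_of_forall_adj _ _ hab fun _ _ => h.adj_or_adj)

variable [Fintype V]

open Classical in
noncomputable def outerNeighbors (G : SimpleGraph V) (S : Finset V) (a : V) : Finset V :=
  Finset.univ.filter fun v => v ∉ S ∧ G.Adj a v

lemma mem_outerNeighbors {v : V} : v ∈ outerNeighbors G S a ↔ v ∉ S ∧ G.Adj a v := by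
  simp [outerNeighbors]

lemma SeparatedPair.not_adj_of_mem_outerNeighbors (h : SeparatedPair G c S a b) {v w : V}
    (hv : v ∈ outerNeighbors G S a) (hw : w ∈ outerNeighbors G S b) : ¬G.Adj v w := by
  rw [mem_outerNeighbors] at hv hw
  intro hvw
  exact h.not_reachable (((reachable_induce_of_adj _ hv.1 hv.2).trans
    (reachable_induce_of_adj _ hw.1 hvw)).trans (reachable_induce_of_adj _ _ hw.2.symm))

lemma SeparatedPair.disjoint_outerNeighbors (h : SeparatedPair G c S a b) :
    Disjoint (outerNeighbors G S a) (outerNeighbors G S b) := by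
  refine Finset.disjoint_left.2 fun v hva hvb => ?_
  rw [mem_outerNeighbors] at hva hvb
  exact h.not_reachable ((reachable_induce_of_adj _ hva.1 hva.2).trans
    (reachable_induce_of_adj _ _ hvb.2.symm))

lemma SeparatedPair.not_adj_right (h : SeparatedPair G c S a b) {v : V}
    (hv : v ∈ outerNeighbors G S a) : ¬G.Adj b v := fun hbv =>
  Finset.disjoint_left.1 h.disjoint_outerNeighbors hv
    (mem_outerNeighbors.2 ⟨(mem_outerNeighbors.1 hv).1, hbv⟩)

lemma SeparatedPair.adj_of_pair_mem (h : SeparatedPair G c S a b) {v p : V}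
    (hv : v ∈ outerNeighbors G S a) (hvp : {v, p} ∈ c) : G.Adj a p ∧ G.Adj b p := by
  have hne : ({v, p} : Finset V) ≠ {b, a} := by
    intro heq
    have hav := (mem_outerNeighbors.1 hv).2
    have hvba : v ∈ ({b, a} : Finset V) := heq ▸ Finset.mem_insert_self v {p}
    obtain rfl | rfl : v = b ∨ v = a := by simpa using hvba
    exacts [h.not_adj hav, G.irrefl hav]
  obtain ⟨-, hpb, hpa⟩ := h.kempe.adj_of_pair_mem hvp (Finset.pair_comm a b ▸ h.pair_mem) hne
    fun hvb => h.not_adj_right hv hvb.symm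
  exact ⟨hpa.symm, hpb.symm⟩

lemma SeparatedPair.exists_partner (h : SeparatedPair G c S a b) {v : V}
    (hv : v ∈ outerNeighbors G S a) : ∃ p ∈ S, {v, p} ∈ c := by
  obtain ⟨p, hvp⟩ := h.kempe.1.exists_pair_mem h.noAntitriangle v
  refine ⟨p, ?_, hvp⟩
  by_contra hpS
  obtain ⟨hap, hbp⟩ := h.adj_of_pair_mem hv hvp
  exact Finset.disjoint_left.1 h.disjoint_outerNeighbors (mem_outerNeighbors.2 ⟨hpS, hap⟩)
    (mem_outerNeighbors.2 ⟨hpS, hbp⟩)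

lemma SeparatedPair.adj_of_pair_mem_of_pair_mem (h : SeparatedPair G c S a b) {v w p q : V}
    (hv : v ∈ outerNeighbors G S a) (hw : w ∈ outerNeighbors G S b) (hvp : {v, p} ∈ c)
    (hwq : {w, q} ∈ c) (hpS : p ∈ S) : G.Adj v q ∧ G.Adj p q := by
  have hne : ({v, p} : Finset V) ≠ {w, q} := by
    intro heq
    have hwvp : w ∈ ({v, p} : Finset V) := heq ▸ Finset.mem_insert_self w {q}
    obtain rfl | rfl : w = v ∨ w = p := by simpa using hwvp
    exacts [Finset.disjoint_left.1 h.disjoint_outerNeighbors hv hw,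
      (mem_outerNeighbors.1 hw).1 hpS]
  obtain ⟨hvq, -, hpq⟩ := h.kempe.adj_of_pair_mem hvp hwq hne
    (h.not_adj_of_mem_outerNeighbors hv hw)
  exact ⟨hvq, hpq⟩

lemma SeparatedPair.isClique (h : SeparatedPair G c S a b) :
    G.IsClique
      ((insert a (singletonClassVertices c ∪ outerNeighbors G S a) : Finset V) : Set V) := by
  have hU : ∀ x ∈ singletonClassVertices c, ∀ y, x ≠ y → G.Adj x y := fun x hx _ hxy =>
    h.kempe.adj_of_singleton_mem (Finset.mem_filter.1 hx).2 hxy.symm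
  have hN : ∀ x ∈ outerNeighbors G S a, x ≠ b ∧ ¬G.Adj x b := fun x hx =>
    ⟨by rintro rfl; exact h.not_adj (mem_outerNeighbors.1 hx).2,
      fun hxb => h.not_adj_right hx hxb.symm⟩
  intro x hx y hy hxy
  simp only [Finset.mem_coe, Finset.mem_insert, Finset.mem_union] at hx hy
  rcases hx with rfl | hxU | hxN
  · rcases hy with rfl | hyU | hyN
    exacts [absurd rfl hxy, (hU y hyU x hxy.symm).symm, (mem_outerNeighbors.1 hyN).2]
  · exact hU x hxU y hxy
  · rcases hy with rfl | hyU | hyN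
    · exact (mem_outerNeighbors.1 hxN).2.symm
    · exact (hU y hyU x hxy.symm).symm
    · exact h.noAntitriangle.adj_of_not_adj hxy (hN x hxN).1 (hN y hyN).1 (hN x hxN).2
        (hN y hyN).2

lemma SeparatedPair.partner_notMem (h : SeparatedPair G c S a b) {v p : V} (hvS : v ∉ S)
    (hvp : {v, p} ∈ c) (hpS : p ∈ S) :
    p ∉ insert a (singletonClassVertices c ∪ outerNeighbors G S a) := by
  simp only [Finset.mem_insert, Finset.mem_union, not_or]
  refine ⟨fun hpa => h.left_notMem (hpa ▸ hpS), fun hpU => ?_,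
    fun hpN => (mem_outerNeighbors.1 hpN).1 hpS⟩
  have hvp' := h.kempe.1.eq_of_mem_of_mem hvp (Finset.mem_filter.1 hpU).2 (v := p) (by simp)
    (by simp)
  have hvp'' : v ∈ ({p} : Finset V) := hvp' ▸ Finset.mem_insert_self v {p}
  exact hvS (Finset.mem_singleton.1 hvp'' ▸ hpS)

lemma SeparatedPair.adj_of_mem_of_pair_mem (h : SeparatedPair G c S a b) {x w q : V}
    (hx : x ∈ insert a (singletonClassVertices c ∪ outerNeighbors G S a))
    (hw : w ∈ outerNeighbors G S b) (hwq : {w, q} ∈ c) (hqS : q ∈ S) : G.Adj x q := by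
  have hqx : q ≠ x := fun hqx =>
    h.partner_notMem (mem_outerNeighbors.1 hw).1 hwq hqS (hqx ▸ hx)
  simp only [Finset.mem_insert, Finset.mem_union] at hx
  obtain rfl | hxU | hxN := hx
  · exact (h.symm.adj_of_pair_mem hw hwq).2
  · exact h.kempe.adj_of_singleton_mem (Finset.mem_filter.1 hxU).2 hqx
  · obtain ⟨p, hpS, hxp⟩ := h.exists_partner hxN
    exact (h.adj_of_pair_mem_of_pair_mem hxN hw hxp hwq hpS).1

lemma SeparatedPair.card_insert_union (h : SeparatedPair G c S a b) :
    (insert a (singletonClassVertices c ∪ outerNeighbors G S a)).card =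
      1 + (singletonClassVertices c).card + (outerNeighbors G S a).card := by
  have hUS : ∀ u ∈ singletonClassVertices c, u ∈ S := fun u hu =>
    h.kempe.mem_of_singleton_mem h.not_connected (Finset.mem_filter.1 hu).2
  have hdisj : Disjoint (singletonClassVertices c) (outerNeighbors G S a) :=
    Finset.disjoint_left.2 fun u hu huN => (mem_outerNeighbors.1 huN).1 (hUS u hu)
  have ha : a ∉ singletonClassVertices c ∪ outerNeighbors G S a := by
    simp only [Finset.mem_union, mem_outerNeighbors, not_or]
    exact ⟨fun haU => h.left_notMem (hUS a haU), fun ha => G.irrefl ha.2⟩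
  rw [Finset.card_insert_of_notMem ha, Finset.card_union_of_disjoint hdisj]
  ring

lemma SeparatedPair.card_outerNeighbors_add_card (h : SeparatedPair G c S a b) :
    (outerNeighbors G S a).card + (outerNeighbors G S b).card + 2 + S.card = Fintype.card V := by
  have hcompl : Sᶜ = insert a (insert b (outerNeighbors G S a ∪ outerNeighbors G S b)) := by
    ext v
    simp only [Finset.mem_compl, Finset.mem_insert, Finset.mem_union, mem_outerNeighbors]
    constructor
    · intro hv
      by_cases hva : v = a
      · exact .inl hva
      by_cases hvb : v = b
      · exact .inr (.inl hvb)
      rcases h.adj_or_adj hva hvb with hav | hbv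
      exacts [.inr (.inr (.inl ⟨hv, hav⟩)), .inr (.inr (.inr ⟨hv, hbv⟩))]
    · rintro (rfl | rfl | ⟨hv, -⟩ | ⟨hv, -⟩)
      exacts [h.left_notMem, h.right_notMem, hv, hv]
  have ha : a ∉ insert b (outerNeighbors G S a ∪ outerNeighbors G S b) := by
    simp [mem_outerNeighbors, h.ne, G.adj_comm b a, h.not_adj]
  have hb : b ∉ outerNeighbors G S a ∪ outerNeighbors G S b := by
    simp [mem_outerNeighbors, h.not_adj]
  rw [← Finset.card_compl_add_card S, hcompl, Finset.card_insert_of_notMem ha,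
    Finset.card_insert_of_notMem hb, Finset.card_union_of_disjoint h.disjoint_outerNeighbors]

lemma SeparatedPair.card_le_one_add (h : SeparatedPair G c S a b) (hS : S.card < c.card) :
    c.card ≤ 1 + (singletonClassVertices c).card + (outerNeighbors G S a).card +
      (outerNeighbors G S b).card := by
  have := h.kempe.1.card_add_card_singletonClassVertices h.noAntitriangle
  have := h.card_outerNeighbors_add_card
  omega

lemma SeparatedPair.exists_partner_map (h : SeparatedPair G c S a b) :
    ∃ pv : V → V,
      (∀ v ∈ outerNeighbors G S a ∪ outerNeighbors G S b, pv v ∈ S ∧ {v, pv v} ∈ c) ∧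
      Set.InjOn pv ↑(outerNeighbors G S a ∪ outerNeighbors G S b) := by
  have hout : ∀ v ∈ outerNeighbors G S a ∪ outerNeighbors G S b, v ∉ S := by
    intro v hv
    rcases Finset.mem_union.1 hv with hv | hv <;> exact (mem_outerNeighbors.1 hv).1
  have hpart :
      ∀ v ∈ outerNeighbors G S a ∪ outerNeighbors G S b, ∃ p ∈ S, {v, p} ∈ c := by
    intro v hv
    rcases Finset.mem_union.1 hv with hv | hv
    exacts [h.exists_partner hv, h.symm.exists_partner hv]
  choose! pv hpvS hpvc using hpart
  refine ⟨pv, fun v hv => ⟨hpvS v hv, hpvc v hv⟩, fun v hv w hw hvw => ?_⟩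
  have hvw' := h.kempe.1.eq_of_mem_of_mem (hpvc v hv) (hpvc w hw) (v := pv v) (by simp)
    (by simp [hvw])
  have hw' : w ∈ ({v, pv v} : Finset V) := hvw' ▸ Finset.mem_insert_self w {pv w}
  rcases Finset.mem_insert.1 hw' with rfl | hw'
  · rfl
  · exact absurd (Finset.mem_singleton.1 hw' ▸ hpvS v hv) (hout w hw)

lemma SeparatedPair.isShallowCliqueMinor_image_partners (h : SeparatedPair G c S a b)
    {pv : V → V}
    (hpv : ∀ v ∈ outerNeighbors G S a ∪ outerNeighbors G S b, pv v ∈ S ∧ {v, pv v} ∈ c)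
    (hinj : Set.InjOn pv ↑(outerNeighbors G S a ∪ outerNeighbors G S b))
    (f : outerNeighbors G S b ↪ outerNeighbors G S a) :
    IsShallowCliqueMinor G (Finset.univ.image fun w : outerNeighbors G S b => {pv w, pv (f w)}) ∧
      (Finset.univ.image fun w : outerNeighbors G S b => ({pv w, pv (f w)} : Finset V)).card =
        (outerNeighbors G S b).card := by
  have hB : ∀ w : outerNeighbors G S b,
      (w : V) ∈ outerNeighbors G S a ∪ outerNeighbors G S b := fun w =>
    Finset.mem_union_right _ w.2
  have hA : ∀ w : outerNeighbors G S b,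
      (f w : V) ∈ outerNeighbors G S a ∪ outerNeighbors G S b := fun w =>
    Finset.mem_union_left _ (f w).2
  have hAB : ∀ (v : outerNeighbors G S a) (w : outerNeighbors G S b), (v : V) ≠ w :=
    fun v w hvw => Finset.disjoint_left.1 h.disjoint_outerNeighbors v.2 (hvw ▸ w.2)
  have hpp : ∀ w w' : outerNeighbors G S b, G.Adj (pv (f w)) (pv w') := fun w w' =>
    (h.adj_of_pair_mem_of_pair_mem (f w).2 w'.2 (hpv _ (hA w)).2 (hpv _ (hB w')).2
      (hpv _ (hA w)).1).2
  refine (isShallowCliqueMinor_image_pair Finset.univ _ _ (fun w _ => .inr (hpp w w).symm)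
    fun w _ w' _ hww' => ⟨?_, pv (f w), by simp, pv w', by simp, hpp w w'⟩).imp_right
    fun hcard => hcard.trans (by simp)
  have hww'' : (w : V) ≠ w' := Subtype.coe_injective.ne hww'
  have hff : (f w : V) ≠ f w' := Subtype.coe_injective.ne (f.injective.ne hww')
  simp only [Finset.disjoint_insert_left, Finset.disjoint_insert_right,
    Finset.disjoint_singleton, Finset.mem_insert, Finset.mem_singleton, not_or]
  exact ⟨⟨hinj.ne (hB w') (hB w) hww''.symm, hinj.ne (hB w') (hA w) (hAB (f w) w').symm⟩,
    hinj.ne (hB w) (hA w') (hAB (f w') w).symm, hinj.ne (hA w) (hA w') hff⟩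

lemma SeparatedPair.exists_shallowCliqueMinor_of_card_le_card (h : SeparatedPair G c S a b)
    (hle : (outerNeighbors G S b).card ≤ (outerNeighbors G S a).card) :
    ∃ K, IsShallowCliqueMinor G K ∧ 1 + (singletonClassVertices c).card +
      (outerNeighbors G S a).card + (outerNeighbors G S b).card ≤ K.card := by
  obtain ⟨pv, hpv, hinj⟩ := h.exists_partner_map
  obtain ⟨f⟩ : Nonempty (outerNeighbors G S b ↪ outerNeighbors G S a) :=
    Function.Embedding.nonempty_of_card_le (by simpa using hle)
  obtain ⟨hK₁, hK₁card⟩ := h.isClique.isShallowCliqueMinor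
  obtain ⟨hK₂, hK₂card⟩ := h.isShallowCliqueMinor_image_partners hpv hinj f
  have hcross : ∀ X ∈ (insert a (singletonClassVertices c ∪ outerNeighbors G S a)).image
      fun x => {x}, ∀ Y ∈ Finset.univ.image
        fun w : outerNeighbors G S b => ({pv w, pv (f w)} : Finset V),
      Disjoint X Y ∧ SetsAdj G X Y := by
    simp only [Finset.mem_image, Finset.mem_univ, true_and, forall_exists_index, and_imp,
      forall_apply_eq_imp_iff₂, forall_apply_eq_imp_iff]
    intro x hx w
    obtain ⟨hwS, hw⟩ := hpv w (Finset.mem_union_right _ w.2)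
    obtain ⟨hfwS, hfw⟩ := hpv (f w) (Finset.mem_union_left _ (f w).2)
    refine ⟨?_, x, by simp, pv w, by simp, h.adj_of_mem_of_pair_mem hx w.2 hw hwS⟩
    simp only [Finset.disjoint_singleton_left, Finset.mem_insert, Finset.mem_singleton, not_or]
    exact ⟨fun e => h.partner_notMem (mem_outerNeighbors.1 w.2).1 hw hwS (e ▸ hx),
      fun e => h.partner_notMem (mem_outerNeighbors.1 (f w).2).1 hfw hfwS (e ▸ hx)⟩
  refine ⟨_, hK₁.union hK₂ hcross, ?_⟩
  rw [Finset.card_union_of_disjoint (hK₁.disjoint fun X hX Y hY => (hcross X hX Y hY).1),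
    hK₁card, hK₂card, h.card_insert_union]

lemma SeparatedPair.exists_shallowCliqueMinor_of_card_lt (h : SeparatedPair G c S a b)
    (hS : S.card < c.card) : ∃ K, IsShallowCliqueMinor G K ∧ c.card ≤ K.card := by
  have hcard := h.card_le_one_add hS
  rcases le_total (outerNeighbors G S b).card (outerNeighbors G S a).card with hle | hle
  · obtain ⟨K, hK, hKcard⟩ := h.exists_shallowCliqueMinor_of_card_le_card hle
    exact ⟨K, hK, by omega⟩
  · obtain ⟨K, hK, hKcard⟩ := h.symm.exists_shallowCliqueMinor_of_card_le_card hle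
    exact ⟨K, hK, by omega⟩

end Separation

end

/-- no antitriangles plus a Kempe-coloring of size `k` force
`k`-connectivity or a shallow clique minor of size `k`. -/
theorem kempe_no_antitriangle_connected_or_shallow {V : Type*} [Fintype V] [DecidableEq V]
    (G : SimpleGraph V) (hat : HasNoAntitriangle G)
    (c : Finset (Finset V)) (k : ℕ) (hk : IsKempe G c) (hcard : c.card = k) :
    (Fintype.card V > k ∧ ∀ S : Finset V, S.card < k →
        (G.induce {v : V | v ∉ S}).Connected) ∨
    ∃ K : Finset (Finset V), IsShallowCliqueMinor G K ∧ K.card = k := by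
  subst hcard
  by_cases hsing : ∀ A ∈ c, A.card = 1
  · exact .inr ⟨c, hk.isShallowCliqueMinor_of_forall_card_eq_one hsing, rfl⟩
  push Not at hsing
  by_cases hconn : ∀ S : Finset V, S.card < c.card → (G.induce {v : V | v ∉ S}).Connected
  · exact .inl ⟨hk.1.card_lt_fintype_card hsing, hconn⟩
  push Not at hconn
  obtain ⟨S, hS, hdisc⟩ := hconn
  obtain ⟨a, b, hab⟩ := exists_separatedPair hk hat hS hdisc
  obtain ⟨K, hK, hKcard⟩ := hab.exists_shallowCliqueMinor_of_card_lt hS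
  obtain ⟨K', hK'K, hK'card⟩ := Finset.exists_subset_card_eq hKcard
  exact .inr ⟨K', hK.subset hK'K, hK'card⟩
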